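/- arXiv:1411.5494 — 7 statements merged into one kernel-verified Lean document; each statement's English description precedes it below -/
import Mathlib

section
/- Let F be a variable convex CNF formula and let σ be an ordering of var(F) witnessing left convexity of the incidence graph of F. Then for every prefix π of σ, the number of var(π)-subterms of F is at most 2(size(F)+1). In particular, the subterm width of F with respect to σ is at most 2(size(F)+1). -/
abbrev Var := ℕ
abbrev Lit := Var × Bool
abbrev Clause := Finset Lit
abbrev CNF := Finset Clause

def varsClause (c : Clause) : Finset Var := c.image Prod.fst
def varsCNF (F : CNF) : Finset Var := F.sup varsClause
def sizeCNF (F : CNF) : ℕ := ∑ c ∈ F, c.card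

def satClauseOn (X : Finset Var) (f : Var → Bool) (c : Clause) : Prop :=
  ∃ l ∈ c, l.1 ∈ X ∧ f l.1 = l.2

instance (X : Finset Var) (f : Var → Bool) : DecidablePred (satClauseOn X f) := fun c => by
  unfold satClauseOn; infer_instance

def restrict (F : CNF) (X : Finset Var) (f : Var → Bool) : CNF :=
  (F.filter (fun c => ¬ satClauseOn X f c)).image (fun c => c.filter (fun l => l.1 ∉ X))

def st (F : CNF) (X : Finset Var) : Set CNF := { G | ∃ f : Var → Bool, G = restrict F X f }

noncomputable def stw (F : CNF) (σ : List Var) : ℕ :=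
  (Finset.Icc 1 σ.length).sup fun i => (st F ((σ.take i).toFinset)).ncard

def satCNF (F : CNF) (f : Var → Bool) : Prop := ∀ c ∈ F, ∃ l ∈ c, f l.1 = l.2

structure OBDD (σ : List Var) where
  size : ℕ
  label : Fin size → (Fin σ.length) ⊕ Bool
  succ : Fin size → Bool → Fin size
  source : Fin size
  ordered : ∀ v i, label v = Sum.inl i → ∀ b j, label (succ v b) = Sum.inl j → i < j

def OBDD.evalAux {σ : List Var} (D : OBDD σ) (f : Var → Bool) : ℕ → Fin D.size → Bool
  | 0, v => match D.label v with | .inr b => b | .inl _ => false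
  | n+1, v => match D.label v with
    | .inr b => b
    | .inl i => D.evalAux f n (D.succ v (f (σ.get i)))

def OBDD.eval {σ : List Var} (D : OBDD σ) (f : Var → Bool) : Bool :=
  D.evalAux f (σ.length + 1) D.source

def OBDD.computes {σ : List Var} (D : OBDD σ) (F : CNF) : Prop :=
  ∀ f : Var → Bool, D.eval f = true ↔ satCNF F f

/-- σ witnesses left convexity of the incidence graph of F (variable convexity). -/
def ConvexWitness (F : CNF) (σ : List Var) : Prop :=
  ∀ c ∈ F, ∀ v ∈ varsClause c, ∀ v' ∈ varsClause c, ∀ v'' ∈ σ.toFinset,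
    σ.idxOf v < σ.idxOf v'' → σ.idxOf v'' < σ.idxOf v' → v'' ∈ varsClause c

/-!
Fix a prefix `X` of `σ` and an assignment `f`. In `F[f]` the clauses disjoint from `X` survive
unchanged, the falsified clauses inside `X` all become the empty clause, and the falsified
crossing clauses (meeting both `X` and its complement) are cut down to their part outside `X`.
So `F[f]` is determined by one bit and by the set of falsified crossing clauses. By convexity the
`X`-part of a crossing clause is a final segment of `X`, so these parts form a chain. A falsified
crossing clause `c₀` with the largest `X`-part then determines the whole set: it consists of the
crossing clauses whose `X`-literals all occur in `c₀`. This leaves at most `#crossing + 1`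
possible sets, and `#crossing ≤ size F` since crossing clauses are nonempty.
-/

theorem Set.ncard_range_le_of_factor {α β γ : Type*} {h : α → β} {k : α → γ}
    (hk : (Set.range k).Finite) (hkh : ∀ a b, k a = k b → h a = h b) :
    (Set.range h).ncard ≤ (Set.range k).ncard := by
  cases isEmpty_or_nonempty α
  · simp [Set.range_eq_empty]
  · have hfac : h = (h ∘ Function.invFun k) ∘ k :=
      funext fun a => (hkh _ _ (Function.invFun_eq ⟨a, rfl⟩)).symm
    rw [hfac, Set.range_comp]
    exact Set.ncard_image_le hk

theorem List.idxOf_lt_idxOf_of_mem_take_of_notMem_take {α : Type*} [DecidableEq α]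
    {l : List α} {n : ℕ} {a b : α} (ha : a ∈ l.take n) (hb : b ∉ l.take n) :
    l.idxOf a < l.idxOf b := by
  have ha' : a ∈ l := List.mem_of_mem_take ha
  rw [List.mem_take_iff_idxOf_lt ha'] at ha
  by_cases hb' : b ∈ l
  · rw [List.mem_take_iff_idxOf_lt hb'] at hb
    omega
  · rw [List.idxOf_eq_length_iff.mpr hb']
    exact List.idxOf_lt_length_of_mem ha'

section Restriction

variable (F : CNF) (X : Finset Var)

def crossingClauses : CNF :=
  F.filter fun c => (varsClause c ∩ X).Nonempty ∧ ¬ varsClause c ⊆ X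

def falsifiedCrossing (f : Var → Bool) : CNF :=
  (crossingClauses F X).filter fun c => ¬ satClauseOn X f c

def falsifiesInside (f : Var → Bool) : Bool :=
  decide (∃ c ∈ F, varsClause c ⊆ X ∧ ¬ satClauseOn X f c)

def insidePart (c : Clause) : Clause := c.filter fun l => l.1 ∈ X

def crossingWithin (c₀ : Clause) : CNF :=
  (crossingClauses F X).filter fun c => insidePart X c ⊆ insidePart X c₀

def CrossingNested : Prop :=
  ∀ c ∈ crossingClauses F X, ∀ c' ∈ crossingClauses F X,
    varsClause c ∩ X ⊆ varsClause c' ∩ X ∨ varsClause c' ∩ X ⊆ varsClause c ∩ X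

variable {F X}

theorem mem_varsClause_of_mem {c : Clause} {l : Lit} (hl : l ∈ c) : l.1 ∈ varsClause c :=
  Finset.mem_image_of_mem Prod.fst hl

theorem restrict_subset_restrict {f g : Var → Bool}
    (hin : falsifiesInside F X f = true → falsifiesInside F X g = true)
    (hcross : falsifiedCrossing F X f ⊆ falsifiedCrossing F X g) :
    restrict F X f ⊆ restrict F X g := by
  intro d hd
  simp only [restrict, Finset.mem_image, Finset.mem_filter] at hd ⊢
  obtain ⟨c, ⟨hcF, hcf⟩, rfl⟩ := hd
  by_cases hinside : varsClause c ⊆ X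
  · have hempty : ∀ c' : Clause, varsClause c' ⊆ X → c'.filter (fun l => l.1 ∉ X) = ∅ :=
      fun c' hc' => Finset.filter_false_of_mem fun l hl =>
        not_not.mpr (hc' (mem_varsClause_of_mem hl))
    obtain ⟨c', hc'F, hc'X, hc'g⟩ :=
      of_decide_eq_true (hin (decide_eq_true ⟨c, hcF, hinside, hcf⟩))
    exact ⟨c', ⟨hc'F, hc'g⟩, by rw [hempty c hinside, hempty c' hc'X]⟩
  refine ⟨c, ⟨hcF, ?_⟩, rfl⟩
  by_cases hmeet : (varsClause c ∩ X).Nonempty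
  · have hc : c ∈ falsifiedCrossing F X f :=
      Finset.mem_filter.mpr ⟨Finset.mem_filter.mpr ⟨hcF, hmeet, hinside⟩, hcf⟩
    exact (Finset.mem_filter.mp (hcross hc)).2
  · rintro ⟨l, hl, hlX, -⟩
    exact hmeet ⟨l.1, Finset.mem_inter.mpr ⟨mem_varsClause_of_mem hl, hlX⟩⟩

theorem insidePart_subset_of_not_satClauseOn {f : Var → Bool} {c c' : Clause}
    (hc : ¬ satClauseOn X f c) (hc' : ¬ satClauseOn X f c')
    (h : varsClause c ∩ X ⊆ varsClause c' ∩ X) : insidePart X c ⊆ insidePart X c' := by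
  intro l hl
  obtain ⟨hlc, hlX⟩ := Finset.mem_filter.mp hl
  have hlc' : l.1 ∈ varsClause c' ∩ X :=
    h (Finset.mem_inter.mpr ⟨mem_varsClause_of_mem hlc, hlX⟩)
  obtain ⟨l', hl'c', hl'⟩ := Finset.mem_image.mp (Finset.mem_inter.mp hlc').1
  -- both literals are falsified by `f`, so they have the same sign
  have hsign : l'.2 = l.2 := by
    have h₁ : f l.1 ≠ l.2 := fun he => hc ⟨l, hlc, hlX, he⟩
    have h₂ : f l.1 ≠ l'.2 := fun he => hc' ⟨l', hl'c', hl' ▸ hlX, hl' ▸ he⟩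
    revert h₁ h₂
    cases f l.1 <;> cases l.2 <;> cases l'.2 <;> decide
  have : l' = l := Prod.ext hl' hsign
  exact Finset.mem_filter.mpr ⟨this ▸ hl'c', hlX⟩

theorem falsifiedCrossing_eq_crossingWithin (hnest : CrossingNested F X) {f : Var → Bool}
    {c₀ : Clause} (hc₀ : c₀ ∈ falsifiedCrossing F X f)
    (hmax : ∀ c ∈ falsifiedCrossing F X f, (insidePart X c).card ≤ (insidePart X c₀).card) :
    falsifiedCrossing F X f = crossingWithin F X c₀ := by
  obtain ⟨hc₀C, hc₀f⟩ := Finset.mem_filter.mp hc₀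
  ext c
  simp only [falsifiedCrossing, crossingWithin, Finset.mem_filter, and_congr_right_iff]
  intro hcC
  constructor
  · intro hcf
    rcases hnest c hcC c₀ hc₀C with hsub | hsub
    · exact insidePart_subset_of_not_satClauseOn hcf hc₀f hsub
    · have hsub' := insidePart_subset_of_not_satClauseOn hc₀f hcf hsub
      rw [Finset.eq_of_subset_of_card_le hsub' (hmax c (Finset.mem_filter.mpr ⟨hcC, hcf⟩))]
  · rintro hsub ⟨l, hl, hlX, hfl⟩
    have hlc₀ : l ∈ insidePart X c₀ := hsub (Finset.mem_filter.mpr ⟨hl, hlX⟩)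
    exact hc₀f ⟨l, (Finset.mem_filter.mp hlc₀).1, hlX, hfl⟩

theorem range_falsifiedCrossing_subset (hnest : CrossingNested F X) :
    Set.range (falsifiedCrossing F X) ⊆
      ↑(insert ∅ ((crossingClauses F X).image (crossingWithin F X))) := by
  rintro _ ⟨f, rfl⟩
  rw [Finset.coe_insert, Set.mem_insert_iff, Finset.mem_coe, Finset.mem_image]
  rcases (falsifiedCrossing F X f).eq_empty_or_nonempty with hempty | hne
  · exact Or.inl hempty
  obtain ⟨c₀, hc₀, hmax⟩ := Finset.exists_max_image _ (fun c => (insidePart X c).card) hne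
  exact Or.inr ⟨c₀, (Finset.mem_filter.mp hc₀).1,
    (falsifiedCrossing_eq_crossingWithin hnest hc₀ hmax).symm⟩

theorem ncard_st_le_of_crossingNested (hnest : CrossingNested F X) :
    (st F X).ncard ≤ 2 * ((crossingClauses F X).card + 1) := by
  set T := insert ∅ ((crossingClauses F X).image (crossingWithin F X))
  have hrange : Set.range (fun f => (falsifiesInside F X f, falsifiedCrossing F X f)) ⊆
      ((Finset.univ ×ˢ T : Finset (Bool × CNF)) : Set (Bool × CNF)) := by
    rintro _ ⟨f, rfl⟩
    exact Finset.mem_product.mpr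
      ⟨Finset.mem_univ _, range_falsifiedCrossing_subset hnest ⟨f, rfl⟩⟩
  have hfactor : ∀ f g : Var → Bool,
      (falsifiesInside F X f, falsifiedCrossing F X f) =
        (falsifiesInside F X g, falsifiedCrossing F X g) → restrict F X f = restrict F X g := by
    intro f g hfg
    obtain ⟨hin, hcross⟩ := Prod.mk.inj hfg
    exact (restrict_subset_restrict (fun h => hin ▸ h) hcross.subset).antisymm
      (restrict_subset_restrict (fun h => hin ▸ h) hcross.symm.subset)
  have hst : st F X = Set.range (restrict F X) := Set.ext fun G => exists_congr fun f => eq_comm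
  calc (st F X).ncard
      ≤ (Set.range fun f => (falsifiesInside F X f, falsifiedCrossing F X f)).ncard :=
        hst ▸ Set.ncard_range_le_of_factor ((Finset.finite_toSet _).subset hrange) hfactor
    _ ≤ (Finset.univ ×ˢ T).card :=
        (Set.ncard_le_ncard hrange).trans_eq (Set.ncard_coe_finset _)
    _ ≤ 2 * ((crossingClauses F X).card + 1) := by
        rw [Finset.card_product, Finset.card_univ, Fintype.card_bool]
        exact Nat.mul_le_mul_left 2 ((Finset.card_insert_le _ _).trans
          (Nat.add_le_add_right Finset.card_image_le 1))

theorem card_crossingClauses_le_sizeCNF : (crossingClauses F X).card ≤ sizeCNF F := by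
  calc (crossingClauses F X).card = (crossingClauses F X).card • 1 := by
        rw [smul_eq_mul, mul_one]
    _ ≤ ∑ c ∈ crossingClauses F X, c.card := Finset.card_nsmul_le_sum _ _ _ fun c hc => by
        obtain ⟨v, hv⟩ := (Finset.mem_filter.mp hc).2.1
        obtain ⟨l, hl, -⟩ := Finset.mem_image.mp (Finset.mem_inter.mp hv).1
        exact Finset.card_pos.mpr ⟨l, hl⟩
    _ ≤ sizeCNF F := Finset.sum_le_sum_of_subset (Finset.filter_subset _ _)

end Restriction

section Convex

variable {F : CNF} {σ : List Var}

theorem mem_varsClause_of_convexWitness (hconv : ConvexWitness F σ) {i : ℕ} {c : Clause}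
    (hc : c ∈ crossingClauses F (σ.take i).toFinset) {v w : Var} (hv : v ∈ varsClause c)
    (hvX : v ∈ σ.take i) (hwX : w ∈ σ.take i) (hvw : σ.idxOf v ≤ σ.idxOf w) :
    w ∈ varsClause c := by
  obtain ⟨hcF, -, houtside⟩ := Finset.mem_filter.mp hc
  obtain ⟨u, hu, huX⟩ := Finset.not_subset.mp houtside
  rcases hvw.lt_or_eq with hlt | heq
  · exact hconv c hcF v hv u hu w (List.mem_toFinset.mpr (List.mem_of_mem_take hwX)) hlt
      (List.idxOf_lt_idxOf_of_mem_take_of_notMem_take hwX (mt List.mem_toFinset.mpr huX))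
  · rwa [← (List.idxOf_inj (List.mem_of_mem_take hvX)).mp heq]

theorem crossingNested_of_convexWitness (hconv : ConvexWitness F σ) (i : ℕ) :
    CrossingNested F (σ.take i).toFinset := by
  intro c hc c' hc'
  refine or_iff_not_imp_left.mpr fun hnot w hw => ?_
  obtain ⟨v, hv, hv'⟩ := Finset.not_subset.mp hnot
  obtain ⟨hvc, hvX⟩ := Finset.mem_inter.mp hv
  obtain ⟨hwc', hwX⟩ := Finset.mem_inter.mp hw
  rw [List.mem_toFinset] at hvX hwX
  refine Finset.mem_inter.mpr ⟨?_, List.mem_toFinset.mpr hwX⟩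
  by_contra hwc
  rcases le_total (σ.idxOf v) (σ.idxOf w) with hvw | hwv
  · exact hwc (mem_varsClause_of_convexWitness hconv hc hvc hvX hwX hvw)
  · exact hv' (Finset.mem_inter.mpr
      ⟨mem_varsClause_of_convexWitness hconv hc' hwc' hwX hvX hwv, List.mem_toFinset.mpr hvX⟩)

end Convex

theorem convex_few_subterms_general (F : CNF) (σ : List Var) (hconv : ConvexWitness F σ) :
    (∀ i ≤ σ.length, (st F ((σ.take i).toFinset)).ncard ≤ 2 * (sizeCNF F + 1)) ∧
      stw F σ ≤ 2 * (sizeCNF F + 1) := by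
  have hbound : ∀ i, (st F ((σ.take i).toFinset)).ncard ≤ 2 * (sizeCNF F + 1) := fun i =>
    (ncard_st_le_of_crossingNested (crossingNested_of_convexWitness hconv i)).trans
      (Nat.mul_le_mul_left 2 (Nat.add_le_add_right card_crossingClauses_le_sizeCNF 1))
  exact ⟨fun i _ => hbound i, Finset.sup_le fun i _ => hbound i⟩

/-- for a variable convex CNF with convexity ordering σ, every prefix π
has at most 2(size(F)+1) many var(π)-subterms, hence stw(F,σ) ≤ 2(size(F)+1). -/
theorem convex_few_subterms (F : CNF) (σ : List Var)
    (hnd : σ.Nodup) (hv : σ.toFinset = varsCNF F) (hconv : ConvexWitness F σ) :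
    (∀ i ≤ σ.length, (st F ((σ.take i).toFinset)).ncard ≤ 2 * (sizeCNF F + 1)) ∧
      stw F σ ≤ 2 * (sizeCNF F + 1) :=
  convex_few_subterms_general F σ hconv
end

section
/- Let F be a variable convex CNF with convexity ordering σ, let π be a prefix of σ, and call a clause c var(π)-active if var(c) intersects both var(π) and var(F)∖var(π). Then for any two var(π)-active clauses c and c', the sets var(c)∩var(π) and var(c')∩var(π) are comparable under inclusion (one contains the other). -/
/-!
Along σ, the variables of a clause form an interval. If that interval leaves the prefix
`σ.take i`, its part inside the prefix is a final segment of the prefix, and any two final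
segments of a linearly ordered set are nested.
-/

theorem List.idxOf_lt_idxOf_of_mem_take_of_not_mem_take {α : Type*} [BEq α] [LawfulBEq α]
    {l : List α} {i : ℕ} {w u : α} (hw : w ∈ l.take i) (hu : u ∉ l.take i) :
    l.idxOf w < l.idxOf u := by
  have hwl : w ∈ l := List.mem_of_mem_take hw
  have hwi : l.idxOf w < i := (List.mem_take_iff_idxOf_lt hwl).1 hw
  by_cases hul : u ∈ l
  · have hui : ¬ l.idxOf u < i := fun h => hu ((List.mem_take_iff_idxOf_lt hul).2 h)
    omega
  · rw [List.idxOf_eq_length hul]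
    exact List.idxOf_lt_length_of_mem hwl

theorem Finset.subset_or_subset_of_forall_le_mem {α β : Type*} [LinearOrder β] (f : α → β)
    {X s t : Finset α} (hs : s ⊆ X) (ht : t ⊆ X)
    (hs_up : ∀ a ∈ s, ∀ x ∈ X, f a ≤ f x → x ∈ s)
    (ht_up : ∀ b ∈ t, ∀ x ∈ X, f b ≤ f x → x ∈ t) :
    s ⊆ t ∨ t ⊆ s := by
  by_contra! h
  obtain ⟨a, has, hat⟩ := Finset.not_subset.1 h.1
  obtain ⟨b, hbt, hbs⟩ := Finset.not_subset.1 h.2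
  rcases le_total (f a) (f b) with hab | hba
  · exact hbs (hs_up a has b (ht hbt) hab)
  · exact hat (ht_up b hbt a (hs has) hba)

theorem ConvexWitness.mem_varsClause_of_idxOf_le {F : CNF} {σ : List Var}
    (hconv : ConvexWitness F σ) {d : Clause} (hd : d ∈ F) {i : ℕ} {u v w : Var}
    (hu : u ∈ varsClause d \ (σ.take i).toFinset) (hv : v ∈ varsClause d)
    (hw : w ∈ σ.take i) (hvw : σ.idxOf v ≤ σ.idxOf w) :
    w ∈ varsClause d := by
  rw [Finset.mem_sdiff, List.mem_toFinset] at hu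
  rcases hvw.eq_or_lt with hvw | hvw
  · rwa [(List.idxOf_inj (List.mem_of_mem_take hw)).1 hvw.symm]
  · exact hconv d hd v hv u hu.1 w (List.mem_toFinset.2 (List.mem_of_mem_take hw)) hvw
      (List.idxOf_lt_idxOf_of_mem_take_of_not_mem_take hw hu.2)

theorem convex_active_clauses_comparable_general (F : CNF) (σ : List Var)
    (hconv : ConvexWitness F σ)
    (i : ℕ)
    (c c' : Clause) (hc : c ∈ F) (hc' : c' ∈ F)
    (hact : (varsClause c ∩ (σ.take i).toFinset).Nonempty ∧
            (varsClause c \ (σ.take i).toFinset).Nonempty)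
    (hact' : (varsClause c' ∩ (σ.take i).toFinset).Nonempty ∧
             (varsClause c' \ (σ.take i).toFinset).Nonempty) :
    varsClause c ∩ (σ.take i).toFinset ⊆ varsClause c' ∩ (σ.take i).toFinset ∨
      varsClause c' ∩ (σ.take i).toFinset ⊆ varsClause c ∩ (σ.take i).toFinset := by
  have final_segment : ∀ d ∈ F, (varsClause d \ (σ.take i).toFinset).Nonempty →
      ∀ v ∈ varsClause d ∩ (σ.take i).toFinset, ∀ w ∈ (σ.take i).toFinset,
        σ.idxOf v ≤ σ.idxOf w → w ∈ varsClause d ∩ (σ.take i).toFinset := by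
    rintro d hd ⟨u, hu⟩ v hv w hw hvw
    rw [Finset.mem_inter] at hv ⊢
    exact ⟨hconv.mem_varsClause_of_idxOf_le hd hu hv.1 (List.mem_toFinset.1 hw) hvw, hw⟩
  exact Finset.subset_or_subset_of_forall_le_mem σ.idxOf Finset.inter_subset_right
    Finset.inter_subset_right (final_segment c hc hact.2) (final_segment c' hc' hact'.2)

/-- for var(π)-active clauses c, c' of a variable convex CNF,
the sets var(c)∩var(π) and var(c')∩var(π) are comparable under inclusion. -/
theorem convex_active_clauses_comparable (F : CNF) (σ : List Var)
    (hnd : σ.Nodup) (hv : σ.toFinset = varsCNF F) (hconv : ConvexWitness F σ)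
    (i : ℕ) (hi : i ≤ σ.length)
    (c c' : Clause) (hc : c ∈ F) (hc' : c' ∈ F)
    (hact : (varsClause c ∩ (σ.take i).toFinset).Nonempty ∧
            (varsClause c \ (σ.take i).toFinset).Nonempty)
    (hact' : (varsClause c' ∩ (σ.take i).toFinset).Nonempty ∧
             (varsClause c' \ (σ.take i).toFinset).Nonempty) :
    varsClause c ∩ (σ.take i).toFinset ⊆ varsClause c' ∩ (σ.take i).toFinset ∨
      varsClause c' ∩ (σ.take i).toFinset ⊆ varsClause c ∩ (σ.take i).toFinset :=
  convex_active_clauses_comparable_general F σ hconv i c c' hc hc' hact hact'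
end

section
/- Let F be a CNF whose incidence graph has pathwidth k−1, and let σ be a forget ordering of var(F) derived from a width-(k−1) path decomposition. Then the subterm width of F with respect to σ is at most 2^{k+1}. -/
/-- Vertices of the incidence graph of a CNF: variables and clauses. -/
abbrev IVertex := Var ⊕ Clause

/-- P is a path decomposition of the incidence graph of F. -/
def IsPathDecomp (F : CNF) (P : List (Finset IVertex)) : Prop :=
  (∀ x ∈ varsCNF F, ∃ B ∈ P, Sum.inl x ∈ B) ∧
  (∀ c ∈ F, ∃ B ∈ P, Sum.inr c ∈ B) ∧
  (∀ c ∈ F, ∀ x ∈ varsClause c, ∃ B ∈ P, Sum.inl x ∈ B ∧ Sum.inr c ∈ B) ∧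
  (∀ u : IVertex, ∀ i j k : ℕ, i ≤ j → j ≤ k →
    ∀ (hi : i < P.length) (hj : j < P.length) (hk : k < P.length),
      u ∈ P.get ⟨i, hi⟩ → u ∈ P.get ⟨k, hk⟩ → u ∈ P.get ⟨j, hj⟩)

/-- Index of the first bag of P containing the vertex u. -/
def firstIdx (P : List (Finset IVertex)) (u : IVertex) : ℕ :=
  P.findIdx (fun B => decide (u ∈ B))

/-- σ is a forget ordering of var(F) with respect to the path decomposition P:
variables are ordered by the position of the first bag containing them. -/
def IsForgetOrdering (F : CNF) (P : List (Finset IVertex)) (σ : List Var) : Prop :=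
  σ.Nodup ∧ σ.toFinset = varsCNF F ∧
    ∀ x ∈ varsCNF F, ∀ y ∈ varsCNF F,
      firstIdx P (Sum.inl x) < firstIdx P (Sum.inl y) → σ.idxOf x < σ.idxOf y


/-!
Fix a prefix `X` of `σ` ending in the variable `x`, and let `B` be the first bag containing `x`.
Since `σ` is a forget ordering, every variable of `X` enters the decomposition no later than `B`
and every other variable no earlier, so by the interval property a clause that meets both `X` and
its complement either lies in `B` or has all its `X`-variables in `B`. Hence the restriction of `F`
by an assignment `f` of `X` is determined by `f` on the variables of `B`, by which clauses of `B`
are satisfied by `f`, and by whether `f` falsifies some clause outright: at most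
`2 ^ (|B| + 1) ≤ 2 ^ (k + 1)` restrictions.
-/

theorem Function.FactorsThrough.ncard_range_le {α β γ : Type*} [Finite γ] {f : α → β}
    {g : α → γ} (h : f.FactorsThrough g) : (Set.range f).ncard ≤ Nat.card γ := by
  choose a ha using fun y : Set.range f => y.2
  refine Nat.card_le_card_of_injective (fun y => g (a y)) fun y z hyz => ?_
  exact Subtype.ext ((ha y).symm.trans ((h hyz).trans (ha z)))

lemma st_eq_range (F : CNF) (X : Finset Var) : st F X = Set.range (restrict F X) :=
  Set.ext fun _ => exists_congr fun _ => eq_comm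

lemma mem_restrict {F : CNF} {X : Finset Var} {f : Var → Bool} {d : Clause} :
    d ∈ restrict F X f ↔ ∃ c ∈ F, ¬ satClauseOn X f c ∧ c.filter (fun l => l.1 ∉ X) = d := by
  simp only [restrict, Finset.mem_image, Finset.mem_filter, and_assoc]

def IsBoundary (F : CNF) (X BV : Finset Var) (BC : Finset Clause) : Prop :=
  ∀ c ∈ F, c ∉ BC → ¬ varsClause c ⊆ X → varsClause c ∩ X ⊆ BV

section Boundary

variable {F : CNF} {X BV : Finset Var} {BC : Finset Clause}

lemma restrict_subset_restrict_s4 (hB : IsBoundary F X BV BC) {f g : Var → Bool}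
    (hfg : ∀ v ∈ BV, f v = g v) (hsat : ∀ c ∈ BC, satClauseOn X g c → satClauseOn X f c)
    (hempty : ∅ ∈ restrict F X f → ∅ ∈ restrict F X g) :
    restrict F X f ⊆ restrict F X g := by
  intro d hd
  rcases eq_or_ne d ∅ with rfl | hd_ne
  · exact hempty hd
  obtain ⟨c, hcF, hf_unsat, rfl⟩ := mem_restrict.mp hd
  have hc_out : ¬ varsClause c ⊆ X := fun hsub => hd_ne <| Finset.filter_eq_empty_iff.mpr
    fun l hl => not_not.mpr (hsub (Finset.mem_image_of_mem Prod.fst hl))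
  refine mem_restrict.mpr ⟨c, hcF, ?_, rfl⟩
  rintro ⟨l, hl, hlX, hgl⟩
  by_cases hcBC : c ∈ BC
  · exact hf_unsat (hsat c hcBC ⟨l, hl, hlX, hgl⟩)
  · have hlBV : l.1 ∈ BV :=
      hB c hcF hcBC hc_out (Finset.mem_inter.mpr ⟨Finset.mem_image_of_mem Prod.fst hl, hlX⟩)
    exact hf_unsat ⟨l, hl, hlX, (hfg _ hlBV).trans hgl⟩

lemma ncard_st_le_of_isBoundary (hB : IsBoundary F X BV BC) :
    (st F X).ncard ≤ 2 ^ (BV.card + BC.card + 1) := by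
  -- `∅ ∈ restrict F X f` records whether `f` falsifies a clause all of whose variables are in `X`
  let signature (f : Var → Bool) : (BV → Bool) × (BC → Bool) × Bool :=
    (fun v => f v, fun c => decide (satClauseOn X f c), decide (∅ ∈ restrict F X f))
  have hfactor : (restrict F X).FactorsThrough signature := by
    intro f g hfg
    simp only [signature, Prod.mk.injEq, funext_iff, Subtype.forall, decide_eq_decide] at hfg
    obtain ⟨hvar, hsat, hempty⟩ := hfg
    exact Finset.Subset.antisymm
      (restrict_subset_restrict_s4 hB hvar (fun c hc => (hsat c hc).mpr) hempty.mp)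
      (restrict_subset_restrict_s4 hB (fun v hv => (hvar v hv).symm) (fun c hc => (hsat c hc).mp)
        hempty.mpr)
  calc (st F X).ncard ≤ Nat.card ((BV → Bool) × (BC → Bool) × Bool) :=
        st_eq_range F X ▸ hfactor.ncard_range_le
    _ = 2 ^ (BV.card + BC.card + 1) := by
        simp only [Nat.card_eq_fintype_card, Fintype.card_prod, Fintype.card_fun, Fintype.card_coe,
          Fintype.card_bool, pow_succ, pow_add, mul_assoc]

end Boundary

section PathDecomposition

variable {P : List (Finset IVertex)} {u : IVertex}

lemma firstIdx_lt_length (h : ∃ B ∈ P, u ∈ B) : firstIdx P u < P.length :=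
  List.findIdx_lt_length_of_exists (by simpa using h)

lemma mem_getElem_firstIdx (h : firstIdx P u < P.length) : u ∈ P[firstIdx P u] :=
  of_decide_eq_true (List.findIdx_getElem (w := h))

lemma firstIdx_le {j : ℕ} (hj : j < P.length) (h : u ∈ P[j]) : firstIdx P u ≤ j :=
  not_lt.mp fun hlt => by simpa [h] using List.not_of_lt_findIdx hlt

variable {F : CNF}

lemma IsPathDecomp.mem_of_le_of_le (hP : IsPathDecomp F P) {p t q : ℕ} (hp : p < P.length)
    (hq : q < P.length) (hpt : p ≤ t) (htq : t ≤ q) (hup : u ∈ P[p]) (huq : u ∈ P[q]) :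
    u ∈ P[t]'(htq.trans_lt hq) :=
  hP.2.2.2 u p t q hpt htq hp _ hq hup huq

lemma IsPathDecomp.mem_of_firstIdx_le (hP : IsPathDecomp F P) {t q : ℕ} (hq : q < P.length)
    (ht : firstIdx P u ≤ t) (htq : t ≤ q) (huq : u ∈ P[q]) : u ∈ P[t]'(htq.trans_lt hq) :=
  have hfirst := firstIdx_lt_length ⟨_, List.getElem_mem hq, huq⟩
  hP.mem_of_le_of_le hfirst hq ht htq (mem_getElem_firstIdx hfirst) huq

lemma IsPathDecomp.isBoundary_getElem (hP : IsPathDecomp F P) {X : Finset Var} {t : ℕ}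
    (ht : t < P.length) (hle : ∀ v ∈ X, firstIdx P (.inl v) ≤ t)
    (hge : ∀ y ∈ varsCNF F, y ∉ X → t ≤ firstIdx P (.inl y)) :
    IsBoundary F X P[t].toLeft P[t].toRight := by
  intro c hcF hc_bag hc_out v hv
  obtain ⟨hvc, hvX⟩ := Finset.mem_inter.mp hv
  obtain ⟨y, hyc, hyX⟩ := Finset.not_subset.mp hc_out
  obtain ⟨Bv, hBv, hvBv, hcBv⟩ := hP.2.2.1 c hcF v hvc
  obtain ⟨p, hp, rfl⟩ := List.mem_iff_getElem.mp hBv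
  obtain ⟨By, hBy, hyBy, hcBy⟩ := hP.2.2.1 c hcF y hyc
  obtain ⟨q, hq, rfl⟩ := List.mem_iff_getElem.mp hBy
  have hyF : y ∈ varsCNF F := Finset.le_sup (f := varsClause) hcF hyc
  have htq : t ≤ q := (hge y hyF hyX).trans (firstIdx_le hq hyBy)
  rcases le_total p t with hpt | htp
  · exact absurd (hP.mem_of_le_of_le hp hq hpt htq hcBv hcBy) (Finset.mem_toRight.not.mp hc_bag)
  · exact Finset.mem_toLeft.mpr (hP.mem_of_firstIdx_le hp (hle v hvX) htp hvBv)

end PathDecomposition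

lemma IsForgetOrdering.firstIdx_le_of_idxOf_le {F : CNF} {P : List (Finset IVertex)}
    {σ : List Var} (hσ : IsForgetOrdering F P σ) {x y : Var} (hx : x ∈ varsCNF F)
    (hy : y ∈ varsCNF F) (h : σ.idxOf x ≤ σ.idxOf y) :
    firstIdx P (.inl x) ≤ firstIdx P (.inl y) :=
  not_lt.mp fun hlt => (hσ.2.2 y hy x hx hlt).not_ge h

lemma IsForgetOrdering.exists_isBoundary_take {F : CNF} {P : List (Finset IVertex)}
    {σ : List Var} (hσ : IsForgetOrdering F P σ) (hP : IsPathDecomp F P) {i : ℕ} (hi : 0 < i)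
    (hiσ : i ≤ σ.length) :
    ∃ B ∈ P, IsBoundary F (σ.take i).toFinset B.toLeft B.toRight := by
  have hlast : i - 1 < σ.length := by omega
  set x := σ[i - 1]
  have hmem_vars : ∀ {v}, v ∈ σ → v ∈ varsCNF F := fun hv => hσ.2.1 ▸ List.mem_toFinset.mpr hv
  have hx : x ∈ varsCNF F := hmem_vars (List.getElem_mem hlast)
  have hidx_x : σ.idxOf x = i - 1 := hσ.1.idxOf_getElem _ hlast
  have hmem_take : ∀ {v}, v ∈ σ → (v ∈ (σ.take i).toFinset ↔ σ.idxOf v < i) := fun hv => by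
    rw [List.mem_toFinset, List.mem_take_iff_idxOf_lt hv]
  have ht : firstIdx P (.inl x) < P.length := firstIdx_lt_length (hP.1 x hx)
  refine ⟨_, List.getElem_mem ht, hP.isBoundary_getElem ht (fun v hv => ?_) (fun y hy hyX => ?_)⟩
  · have hvσ := List.mem_of_mem_take (List.mem_toFinset.mp hv)
    have := (hmem_take hvσ).mp hv
    exact hσ.firstIdx_le_of_idxOf_le (hmem_vars hvσ) hx (by omega)
  · have := (hmem_take (List.mem_toFinset.mp (hσ.2.1 ▸ hy))).not.mp hyX
    exact hσ.firstIdx_le_of_idxOf_le hx hy (by omega)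

/-- if the incidence graph of F has a path decomposition of width k−1
(all bags of size ≤ k) and σ is a forget ordering for it, then stw(F,σ) ≤ 2^(k+1). -/
theorem pathwidth_subterm_width (F : CNF) (k : ℕ) (P : List (Finset IVertex))
    (σ : List Var) (hP : IsPathDecomp F P) (hw : ∀ B ∈ P, B.card ≤ k)
    (hσ : IsForgetOrdering F P σ) :
    stw F σ ≤ 2 ^ (k + 1) := by
  refine Finset.sup_le fun i hi => ?_
  obtain ⟨hi, hiσ⟩ := Finset.mem_Icc.mp hi
  obtain ⟨B, hBP, hB⟩ := hσ.exists_isBoundary_take hP hi hiσ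
  calc (st F (σ.take i).toFinset).ncard ≤ 2 ^ (B.toLeft.card + B.toRight.card + 1) :=
        ncard_st_le_of_isBoundary hB
    _ = 2 ^ (B.card + 1) := by rw [Finset.card_toLeft_add_card_toRight]
    _ ≤ 2 ^ (k + 1) := Nat.pow_le_pow_right two_pos (Nat.succ_le_succ (hw B hBP))
end

section
/- Let F be a graph CNF (clauses are exactly the edges of a graph without isolated vertices, viewed as positive 2-clauses). Then every OBDD computing the Boolean function of F has at least 2^{sfw(F)} nodes, where sfw(F) is the subfunction width of F. -/
/-- F is a graph CNF: its clauses are exactly positive 2-clauses (edges of a graph). -/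
def GraphCNF (F : CNF) : Prop :=
  ∀ c ∈ F, ∃ u v : Var, u ≠ v ∧ c = ({(u, true), (v, true)} : Clause)

/-- A set of e clauses of the graph CNF F is subfunction productive relative to the
prefix-variable set P: clauses cᵢ = {aᵢ,uᵢ} with aᵢ ∈ P, uᵢ ∉ P, and for i ≠ j no
clause of F equals {aᵢ,aⱼ} or {aᵢ,uⱼ}. -/
def SubfunProductive (F : CNF) (P : Finset Var) (e : ℕ) : Prop :=
  ∃ a u : Fin e → Var,
    Function.Injective a ∧ Function.Injective u ∧
    (∀ i, a i ∈ P) ∧ (∀ i, u i ∈ varsCNF F \ P) ∧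
    (∀ i, ({(a i, true), (u i, true)} : Clause) ∈ F) ∧
    (∀ i j, i ≠ j →
      ({(a i, true), (a j, true)} : Clause) ∉ F ∧
      ({(a i, true), (u j, true)} : Clause) ∉ F)

/-- The subfunction width of F: minimum over orderings σ of var(F) of the maximum over
prefixes π of σ of the largest size of a subfunction productive set. -/
noncomputable def sfw (F : CNF) : ℕ :=
  sInf { m | ∃ σ : List Var, σ.Nodup ∧ σ.toFinset = varsCNF F ∧
    m = (Finset.Icc 1 σ.length).sup
      (fun i => sSup { e | SubfunProductive F ((σ.take i).toFinset) e }) }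

/-!
Fix a prefix `π` of `σ` and a subfunction productive set of clauses `{aⱼ, uⱼ}`, `j < e`.
For `α ∈ {0,1}ᵉ` set `aⱼ := αⱼ` and every other variable of `π` to `1`. The node at which the
OBDD leaves the levels of `π` depends only on the assignment to `π`, and from there on the
computation reads only variables outside `π`. If `α ≠ β` differ at `j₀`, put every variable
outside `π` to `1` except `u_{j₀}`: since no `{aⱼ, aₖ}` and no `{aⱼ, uₖ}` with `j ≠ k` is a
clause, the result satisfies `F` iff the `j₀`-th entry is `1`, so `α` and `β` reach different
nodes. Hence the OBDD has at least `2ᵉ` nodes.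
-/

lemma List.Nodup.get_mem_take_iff {α : Type*} {l : List α} (hl : l.Nodup) {i : ℕ}
    (k : Fin l.length) : l.get k ∈ l.take i ↔ k.val < i := by
  rw [List.mem_take_iff_getElem]
  constructor
  · rintro ⟨j, hj, hjk⟩
    have := (hl.getElem_inj_iff (hi := by omega)).1 hjk
    omega
  · intro hk
    exact ⟨k, by omega, rfl⟩

namespace OBDD

variable {σ : List Var} (D : OBDD σ)

def rank (v : Fin D.size) : ℕ :=
  match D.label v with
  | .inl k => σ.length - k
  | .inr _ => 0

lemma rank_le (v : Fin D.size) : D.rank v ≤ σ.length := by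
  unfold rank; split <;> omega

lemma rank_pos {v : Fin D.size} {k : Fin σ.length} (h : D.label v = .inl k) : 0 < D.rank v := by
  simp only [rank, h]; omega

lemma rank_succ_lt {v : Fin D.size} {k : Fin σ.length} (h : D.label v = .inl k) (b : Bool) :
    D.rank (D.succ v b) < D.rank v := by
  have hord := D.ordered v k h b
  simp only [rank, h]
  split
  · next j hj => have := hord j hj; omega
  · omega

lemma evalAux_eq_of_rank_le (f : Var → Bool) {n m : ℕ} {v : Fin D.size}
    (hn : D.rank v ≤ n) (hm : D.rank v ≤ m) : D.evalAux f n v = D.evalAux f m v := by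
  induction n generalizing v m with
  | zero =>
    rcases h : D.label v with k | b
    · exact absurd hn (D.rank_pos h).not_ge
    · cases m <;> simp [evalAux, h]
  | succ n ih =>
    rcases h : D.label v with k | b
    · obtain ⟨m, rfl⟩ := Nat.exists_eq_add_one.2 ((D.rank_pos h).trans_le hm)
      have := D.rank_succ_lt h (f (σ.get k))
      simp only [evalAux, h]
      exact ih (by omega) (by omega)
    · cases m <;> simp [evalAux, h]

def walk (f : Var → Bool) (i : ℕ) (v : Fin D.size) : Fin D.size :=
  match _h : D.label v with
  | .inl k => if k.val < i then walk f i (D.succ v (f (σ.get k))) else v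
  | .inr _ => v
termination_by D.rank v
decreasing_by exact D.rank_succ_lt _h _

lemma walk_of_lt {f : Var → Bool} {i : ℕ} {v : Fin D.size} {k : Fin σ.length}
    (h : D.label v = .inl k) (hk : k.val < i) :
    D.walk f i v = D.walk f i (D.succ v (f (σ.get k))) := by
  rw [walk]; split <;> simp_all

lemma walk_congr {f f' : Var → Bool} {i : ℕ}
    (hff : ∀ k : Fin σ.length, k.val < i → f (σ.get k) = f' (σ.get k)) (v : Fin D.size) :
    D.walk f i v = D.walk f' i v := by
  fun_induction D.walk f i v with
  | case1 v k h hk ih => rw [ih, hff k hk, ← D.walk_of_lt h hk]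
  | case2 | case3 => rw [walk]; split <;> simp_all

lemma label_walk (f : Var → Bool) (i : ℕ) (v : Fin D.size) :
    ∀ k : Fin σ.length, D.label (D.walk f i v) = .inl k → i ≤ k.val := by
  fun_induction D.walk f i v with
  | case1 _ _ _ _ ih => exact ih
  | case2 _ _ h hk => intro k' hk'; rw [h] at hk'; cases hk'; omega
  | case3 _ _ h => intro k' hk'; simp [h] at hk'

lemma evalAux_walk (f : Var → Bool) (i : ℕ) {n : ℕ} {v : Fin D.size} (hn : D.rank v ≤ n) :
    D.evalAux f n (D.walk f i v) = D.evalAux f n v := by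
  fun_induction D.walk f i v generalizing n with
  | case1 _ k h _ ih =>
    have hlt := D.rank_succ_lt h (f (σ.get k))
    obtain ⟨n, rfl⟩ : ∃ m, n = m + 1 := Nat.exists_eq_add_one.2 (by omega)
    rw [ih (by omega), D.evalAux_eq_of_rank_le f (by omega) le_rfl]
    simp only [evalAux, h]
    exact D.evalAux_eq_of_rank_le f le_rfl (by omega)
  | case2 | case3 => rfl

lemma evalAux_congr {f f' : Var → Bool} {i : ℕ}
    (hff : ∀ k : Fin σ.length, i ≤ k.val → f (σ.get k) = f' (σ.get k)) (n : ℕ) :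
    ∀ v : Fin D.size, (∀ k : Fin σ.length, D.label v = .inl k → i ≤ k.val) →
      D.evalAux f n v = D.evalAux f' n v := by
  induction n with
  | zero => intro v _; rfl
  | succ n ih =>
    intro v hv
    rcases h : D.label v with k | b
    · simp only [evalAux, h, hff k (hv k h)]
      exact ih _ fun j hj => (hv k h).trans (D.ordered v k h _ j hj).le
    · simp [evalAux, h]

lemma eval_eq_of_walk_eq (hnd : σ.Nodup) {i : ℕ} {f f' : Var → Bool}
    (hsuffix : ∀ x ∉ (σ.take i).toFinset, f x = f' x)
    (hwalk : D.walk f i D.source = D.walk f' i D.source) : D.eval f = D.eval f' := by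
  have hfuel : D.rank D.source ≤ σ.length + 1 := (D.rank_le _).trans (Nat.le_succ _)
  unfold eval
  rw [← D.evalAux_walk f i hfuel, ← D.evalAux_walk f' i hfuel, hwalk]
  refine D.evalAux_congr (fun k hk => hsuffix _ ?_) _ _ (D.label_walk f' i _)
  rw [List.mem_toFinset, hnd.get_mem_take_iff]
  omega

theorem card_le_size_of_distinguishable (hnd : σ.Nodup) (i : ℕ) {ι : Type*} [Fintype ι]
    (ρ : ι → Var → Bool)
    (hρ : ∀ x y, x ≠ y → ∃ g : Var → Bool,
      D.eval ((σ.take i).toFinset.piecewise (ρ x) g) ≠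
        D.eval ((σ.take i).toFinset.piecewise (ρ y) g)) :
    Fintype.card ι ≤ D.size := by
  have hwalk : ∀ x g, D.walk ((σ.take i).toFinset.piecewise (ρ x) g) i D.source =
      D.walk (ρ x) i D.source := fun x g =>
    D.walk_congr (fun k hk => Finset.piecewise_eq_of_mem _ _ _
      (by rw [List.mem_toFinset, hnd.get_mem_take_iff]; exact hk)) _
  refine (Fintype.card_le_of_injective (fun x => D.walk (ρ x) i D.source)
    fun x y hxy => ?_).trans_eq (Fintype.card_fin _)
  by_contra hne
  obtain ⟨g, hg⟩ := hρ x y hne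
  refine hg (D.eval_eq_of_walk_eq hnd (fun v hv => ?_) (by rw [hwalk, hwalk]; exact hxy))
  simp only [Finset.piecewise_eq_of_notMem _ _ _ hv]

end OBDD

section GraphCNF

variable {F : CNF} {P : Finset Var} {e : ℕ}

lemma SubfunProductive.zero : SubfunProductive F P 0 :=
  ⟨Fin.elim0, Fin.elim0, fun x => x.elim0, fun x => x.elim0,
    fun x => x.elim0, fun x => x.elim0, fun x => x.elim0, fun x => x.elim0⟩

lemma SubfunProductive.le_card (h : SubfunProductive F P e) : e ≤ P.card := by
  obtain ⟨a, -, ha, -, haP, -⟩ := h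
  simpa using Fintype.card_le_of_injective (fun j => (⟨a j, haP j⟩ : P))
    fun j k hjk => ha (congrArg Subtype.val hjk)

lemma subfunProductive_sSup (F : CNF) (P : Finset Var) :
    SubfunProductive F P (sSup {e | SubfunProductive F P e}) :=
  Nat.sSup_mem ⟨0, SubfunProductive.zero⟩ ⟨P.card, fun _ => SubfunProductive.le_card⟩

lemma satCNF_pair_iff {f : Var → Bool} (hF : GraphCNF F) :
    satCNF F f ↔
      ∀ x y, x ≠ y → ({(x, true), (y, true)} : Clause) ∈ F → f x = true ∨ f y = true := by
  constructor
  · intro hsat x y _ hxy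
    obtain ⟨l, hl, hfl⟩ := hsat _ hxy
    rcases Finset.mem_insert.1 hl with rfl | hl
    · exact .inl hfl
    · rw [Finset.mem_singleton.1 hl] at hfl
      exact .inr hfl
  · intro h c hc
    obtain ⟨x, y, hxy, rfl⟩ := hF c hc
    rcases h x y hxy hc with hx | hy
    · exact ⟨_, Finset.mem_insert_self _ _, hx⟩
    · exact ⟨_, Finset.mem_insert_of_mem (Finset.mem_singleton_self _), hy⟩

lemma satCNF_piecewise_extend_iff (hF : GraphCNF F) {a u : Fin e → Var}
    (ha : Function.Injective a) (haP : ∀ j, a j ∈ P)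
    (hcross : ∀ j k, j ≠ k →
      ({(a j, true), (a k, true)} : Clause) ∉ F ∧ ({(a j, true), (u k, true)} : Clause) ∉ F)
    (α : Fin e → Bool) {j₀ : Fin e} (huP : u j₀ ∉ P)
    (hedge : ({(a j₀, true), (u j₀, true)} : Clause) ∈ F) :
    satCNF F (P.piecewise (Function.extend a α fun _ => true) fun x => decide (x ≠ u j₀)) ↔
      α j₀ = true := by
  set f := P.piecewise (Function.extend a α fun _ => true) fun x => decide (x ≠ u j₀) with hf
  have hfa : ∀ j, f (a j) = α j := fun j => by
    rw [hf, Finset.piecewise_eq_of_mem _ _ _ (haP j), ha.extend_apply]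
  have hfu : f (u j₀) = false := by
    simp [f, Finset.piecewise_eq_of_notMem _ _ _ huP]
  have hfalse : ∀ x, f x = false → (∃ j, a j = x ∧ α j = false) ∨ x = u j₀ := by
    intro x hx
    by_cases hxP : x ∈ P
    · rw [hf, Finset.piecewise_eq_of_mem _ _ _ hxP] at hx
      by_cases hxa : ∃ j, a j = x
      · obtain ⟨j, rfl⟩ := hxa
        exact .inl ⟨j, rfl, by rwa [ha.extend_apply] at hx⟩
      · simp [Function.extend_apply' _ _ _ hxa] at hx
    · rw [hf, Finset.piecewise_eq_of_notMem _ _ _ hxP] at hx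
      exact .inr (by simpa using hx)
  rw [satCNF_pair_iff hF]
  constructor
  · intro hsat
    simpa [hfa, hfu] using hsat _ _ (fun h => huP (by rw [← h]; exact haP j₀)) hedge
  · intro hα x y hne hxy
    by_contra! ⟨hx, hy⟩
    rcases hfalse x (by simpa using hx) with ⟨j, rfl, hj⟩ | rfl <;>
      rcases hfalse y (by simpa using hy) with ⟨k, rfl, hk⟩ | rfl
    · exact (hcross j k fun hjk => by simp_all).1 hxy
    · exact (hcross j j₀ fun hjk => by simp_all).2 hxy
    · rw [Finset.pair_comm] at hxy
      exact (hcross k j₀ fun hjk => by simp_all).2 hxy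
    · exact hne rfl

theorem two_pow_le_size_of_subfunProductive (hF : GraphCNF F) {σ : List Var} (hnd : σ.Nodup)
    (D : OBDD σ) (hD : D.computes F) {i : ℕ}
    (hprod : SubfunProductive F (σ.take i).toFinset e) : 2 ^ e ≤ D.size := by
  obtain ⟨a, u, ha, -, haP, huP, hedge, hcross⟩ := hprod
  have huP' : ∀ j, u j ∉ (σ.take i).toFinset := fun j => (Finset.mem_sdiff.1 (huP j)).2
  calc 2 ^ e = Fintype.card (Fin e → Bool) := by simp
    _ ≤ D.size := by
      refine D.card_le_size_of_distinguishable hnd i (fun α => Function.extend a α fun _ => true)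
        fun α β hne => ?_
      obtain ⟨j₀, hj₀⟩ := Function.ne_iff.1 hne
      refine ⟨fun x => decide (x ≠ u j₀), fun heval => hj₀ (Bool.eq_iff_iff.2 ?_)⟩
      rw [← satCNF_piecewise_extend_iff hF ha haP hcross α (huP' j₀) (hedge j₀),
        ← satCNF_piecewise_extend_iff hF ha haP hcross β (huP' j₀) (hedge j₀), ← hD, ← hD, heval]

end GraphCNF

/-- every OBDD computing a graph CNF F has at least 2^(sfw F) nodes. -/
theorem obdd_lower_bound_sfw (F : CNF) (hF : GraphCNF F)
    (σ : List Var) (hnd : σ.Nodup) (hv : σ.toFinset = varsCNF F)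
    (D : OBDD σ) (hD : D.computes F) :
    2 ^ sfw F ≤ D.size := by
  have hsize : D.size ≠ 0 := D.source.pos.ne'
  rw [← Nat.le_log_iff_pow_le one_lt_two hsize]
  refine (Nat.sInf_le ⟨σ, hnd, hv, rfl⟩ : sfw F ≤ _).trans (Finset.sup_le fun i _ => ?_)
  rw [Nat.le_log_iff_pow_le one_lt_two hsize]
  exact two_pow_le_size_of_subfunProductive hF hnd D hD (subfunProductive_sSup F _)
end

section
/- Let F be a graph CNF, σ an ordering of var(F), π a prefix of σ, and let {c₁,…,c_e} be subfunction productive relative to σ and π with witnesses a₁,…,a_e ∈ var(π) and u₁,…,u_e ∉ var(π). Let L be the set of assignments f : var(π) → {0,1} with f(v) = 1 for all v ∉ {a₁,…,a_e}. Then every f ∈ L satisfies every clause of F contained in var(π), and distinct f, g ∈ L induce distinct subfunctions of F on var(F)∖var(π) (i.e., there is an assignment h of var(F)∖var(π) on which F[f∪h] and F[g∪h] differ in satisfaction). -/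
/-- with a subfunction productive set (witnesses aᵢ ∈ var(π), uᵢ ∉ var(π))
and L the assignments of var(π) that are 1 outside {a₁,…,a_e}: every f ∈ L satisfies
every clause of F inside var(π), and distinct f,g ∈ L induce distinct subfunctions of F. -/
theorem fooling_set_distinct_subfunctions (F : CNF) (hF : GraphCNF F)
    (σ : List Var) (hnd : σ.Nodup) (hv : σ.toFinset = varsCNF F)
    (i : ℕ) (hi : i ≤ σ.length) (e : ℕ) (av uv : Fin e → Var)
    (hainj : Function.Injective av) (huinj : Function.Injective uv)
    (haP : ∀ j, av j ∈ (σ.take i).toFinset)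
    (huP : ∀ j, uv j ∈ varsCNF F \ (σ.take i).toFinset)
    (hcl : ∀ j, ({(av j, true), (uv j, true)} : Clause) ∈ F)
    (hnocl : ∀ j j', j ≠ j' →
      ({(av j, true), (av j', true)} : Clause) ∉ F ∧
      ({(av j, true), (uv j', true)} : Clause) ∉ F) :
    (∀ f : Var → Bool, (∀ v ∈ (σ.take i).toFinset, (∀ j, v ≠ av j) → f v = true) →
      ∀ c ∈ F, varsClause c ⊆ (σ.take i).toFinset → ∃ l ∈ c, f l.1 = l.2) ∧
    (∀ f g : Var → Bool,
      (∀ v ∈ (σ.take i).toFinset, (∀ j, v ≠ av j) → f v = true) →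
      (∀ v ∈ (σ.take i).toFinset, (∀ j, v ≠ av j) → g v = true) →
      (∃ j, f (av j) ≠ g (av j)) →
      ∃ h : Var → Bool,
        ¬(satCNF F (fun x => if x ∈ (σ.take i).toFinset then f x else h x) ↔
          satCNF F (fun x => if x ∈ (σ.take i).toFinset then g x else h x))) := by
  set P := (σ.take i).toFinset with hP
  constructor
  · -- Part 1
    intro f hf c hcF hsub
    obtain ⟨u, v, huv, rfl⟩ := hF c hcF
    have hu : u ∈ P := hsub (by simp [varsClause])
    have hv' : v ∈ P := hsub (by simp [varsClause])
    by_cases hua : ∀ j, u ≠ av j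
    · exact ⟨(u, true), by simp, hf u hu hua⟩
    · push_neg at hua
      obtain ⟨k, hk⟩ := hua
      have hva : ∀ j, v ≠ av j := by
        intro j hj
        subst hk hj
        have hkj : k ≠ j := fun h => huv (by rw [h])
        exact (hnocl k j hkj).1 hcF
      exact ⟨(v, true), by simp, hf v hv' hva⟩
  · -- Part 2
    intro f g hfL hgL hex
    obtain ⟨j, hj⟩ := hex
    -- the key satisfiability lemma
    have key : ∀ q : Var → Bool, (∀ v ∈ P, (∀ k, v ≠ av k) → q v = true) →
        q (av j) = true →
        satCNF F (fun x => if x ∈ P then q x else (fun y => if y = uv j then false else true) x) := by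
      intro q hqL hqj c hcF
      obtain ⟨u, v, huv, rfl⟩ := hF c hcF
      by_contra hnone
      push_neg at hnone
      -- characterize false variables
      have hchar : ∀ x : Var,
          (if x ∈ P then q x else if x = uv j then false else true) = false →
          (x ∉ P ∧ x = uv j) ∨ (∃ k, x = av k ∧ k ≠ j) := by
        intro x hx
        by_cases hxP : x ∈ P
        · rw [if_pos hxP] at hx
          by_cases hxa : ∀ k, x ≠ av k
          · rw [hqL x hxP hxa] at hx; exact absurd hx (by simp)
          · push_neg at hxa
            obtain ⟨k, hk⟩ := hxa
            refine Or.inr ⟨k, hk, ?_⟩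
            intro hkj; subst hkj; rw [hk, hqj] at hx; exact absurd hx (by simp)
        · rw [if_neg hxP] at hx
          by_cases hxu : x = uv j
          · exact Or.inl ⟨hxP, hxu⟩
          · rw [if_neg hxu] at hx; exact absurd hx (by simp)
      have hu := hnone (u, true) (by simp)
      have hv := hnone (v, true) (by simp)
      simp only [Bool.not_eq_true] at hu hv
      have hcu := hchar u hu
      have hcv := hchar v hv
      rcases hcu with ⟨_, rfl⟩ | ⟨k, rfl, hkj⟩
      · rcases hcv with ⟨_, rfl⟩ | ⟨k, rfl, hkj⟩
        · exact huv rfl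
        · exact (hnocl k j hkj).2 (by rwa [Finset.pair_comm] at hcF)
      · rcases hcv with ⟨_, rfl⟩ | ⟨k', rfl, _⟩
        · exact (hnocl k j hkj).2 hcF
        · have hkk' : k ≠ k' := fun h => huv (by rw [h])
          exact (hnocl k k' hkk').1 hcF
    have hajP : av j ∈ P := haP j
    have hujP : uv j ∉ P := (Finset.mem_sdiff.mp (huP j)).2
    -- unsatisfiability for the side that is false at av j
    have unsat : ∀ q : Var → Bool, q (av j) = false →
        ¬ satCNF F (fun x => if x ∈ P then q x else (fun y => if y = uv j then false else true) x) := by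
      intro q hqj hsat
      obtain ⟨l, hl, hval⟩ := hsat _ (hcl j)
      simp only [Finset.mem_insert, Finset.mem_singleton] at hl
      rcases hl with rfl | rfl
      · simp only [if_pos hajP, hqj] at hval; exact absurd hval (by simp)
      · simp only [if_neg hujP, if_pos rfl] at hval; exact absurd hval (by simp)
    refine ⟨fun y => if y = uv j then false else true, ?_⟩
    cases hg : g (av j)
    · have hf : f (av j) = true := by
        cases hfv : f (av j)
        · exact absurd (hfv.trans hg.symm) hj
        · rfl
      intro hiff
      exact unsat g hg (hiff.mp (key f hfL hf))
    · have hf : f (av j) = false := by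
        cases hfv : f (av j)
        · rfl
        · exact absurd (hfv.trans hg.symm) hj
      intro hiff
      exact unsat f hf (hiff.mpr (key g hgL hg))
end

section
/- Let F be a CNF with incidence graph of pathwidth k−1, σ a forget ordering of F with respect to a witnessing path decomposition P, π a prefix of σ, v the last variable of π, and B the first bag of P containing v. Then every var(π)-active clause of F either belongs to B or occurs only in bags strictly after B in P. -/
lemma firstIdx_le_of_mem {P : List (Finset IVertex)} {u : IVertex} {j : ℕ} (hj : j < P.length)
    (hu : u ∈ P.get ⟨j, hj⟩) : firstIdx P u ≤ j :=
  not_lt.1 fun h => absurd hu (by simpa using List.not_of_lt_findIdx h)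

lemma IsPathDecomp.lt_of_mem_of_notMem {F : CNF} {P : List (Finset IVertex)}
    (hP : IsPathDecomp F P) {u : IVertex} {j j' t : ℕ} (hj : j < P.length) (hj' : j' < P.length)
    (ht : t < P.length) (hu : u ∈ P.get ⟨j, hj⟩) (hu' : u ∈ P.get ⟨j', hj'⟩)
    (hut : u ∉ P.get ⟨t, ht⟩) (hjt : j ≤ t) : j' < t :=
  lt_of_not_ge fun htj' => hut (hP.2.2.2 u j t j' hjt htj' hj ht hj' hu hu')

lemma IsForgetOrdering.mem_take_of_firstIdx_lt {F : CNF} {P : List (Finset IVertex)}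
    {σ : List Var} (hσ : IsForgetOrdering F P σ) {i : ℕ} (hi : i < σ.length) {y : Var}
    (hy : y ∈ varsCNF F)
    (hlt : firstIdx P (Sum.inl y) < firstIdx P (Sum.inl (σ.get ⟨i, hi⟩))) :
    y ∈ σ.take (i + 1) := by
  obtain ⟨hnodup, hvars, hmono⟩ := hσ
  have hyσ : y ∈ σ := by rwa [← List.mem_toFinset, hvars]
  have hvF : σ.get ⟨i, hi⟩ ∈ varsCNF F := by
    rw [← hvars, List.mem_toFinset]
    exact List.get_mem σ _
  have hidx : σ.idxOf y < i := hnodup.idxOf_getElem i hi ▸ hmono y hy _ hvF hlt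
  exact (List.mem_take_iff_idxOf_lt hyσ).2 (by omega)

theorem active_clause_in_or_after_bag_general (F : CNF) (P : List (Finset IVertex))
    (σ : List Var) (hP : IsPathDecomp F P)
    (hσ : IsForgetOrdering F P σ)
    (i : ℕ) (hi : i < σ.length)
    (hfi : firstIdx P (Sum.inl (σ.get ⟨i, hi⟩)) < P.length)
    (c : Clause) (hc : c ∈ F)
    (hact : (varsClause c ∩ (σ.take (i+1)).toFinset).Nonempty ∧
            (varsClause c \ (σ.take (i+1)).toFinset).Nonempty) :
    Sum.inr c ∈ P.get ⟨firstIdx P (Sum.inl (σ.get ⟨i, hi⟩)), hfi⟩ ∨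
      (∀ j (hj : j < P.length), Sum.inr c ∈ P.get ⟨j, hj⟩ →
        firstIdx P (Sum.inl (σ.get ⟨i, hi⟩)) < j) := by
  set t := firstIdx P (Sum.inl (σ.get ⟨i, hi⟩))
  by_cases hct : Sum.inr c ∈ P.get ⟨t, hfi⟩
  · exact Or.inl hct
  refine Or.inr fun j hj hcj => lt_of_not_ge fun hjt => ?_
  -- A variable of `c` outside `π` shares a bag with `c`, which by convexity precedes bag `t`;
  -- so that variable is introduced before `σ[i]` and lies in `π` after all.
  obtain ⟨y, hy⟩ := hact.2
  obtain ⟨hyc, hyπ⟩ := Finset.mem_sdiff.1 hy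
  obtain ⟨B, hBP, hyB, hcB⟩ := hP.2.2.1 c hc y hyc
  obtain ⟨⟨j', hj'⟩, rfl⟩ := List.mem_iff_get.1 hBP
  have hj't : j' < t := hP.lt_of_mem_of_notMem hj hj' hfi hcj hcB hct hjt
  have hyF : y ∈ varsCNF F := Finset.mem_sup.2 ⟨c, hc, hyc⟩
  exact hyπ (List.mem_toFinset.2 (hσ.mem_take_of_firstIdx_lt hi hyF
    ((firstIdx_le_of_mem hj' hyB).trans_lt hj't)))

/-- let v be the last variable of the prefix π of a forget ordering σ and
B the first bag containing v; then every var(π)-active clause either belongs to B or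
occurs only in bags strictly after B. -/
theorem active_clause_in_or_after_bag (F : CNF) (k : ℕ) (P : List (Finset IVertex))
    (σ : List Var) (hP : IsPathDecomp F P) (hw : ∀ B ∈ P, B.card ≤ k)
    (hσ : IsForgetOrdering F P σ)
    (i : ℕ) (hi : i < σ.length)
    (hfi : firstIdx P (Sum.inl (σ.get ⟨i, hi⟩)) < P.length)
    (c : Clause) (hc : c ∈ F)
    (hact : (varsClause c ∩ (σ.take (i+1)).toFinset).Nonempty ∧
            (varsClause c \ (σ.take (i+1)).toFinset).Nonempty) :
    Sum.inr c ∈ P.get ⟨firstIdx P (Sum.inl (σ.get ⟨i, hi⟩)), hfi⟩ ∨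
      (∀ j (hj : j < P.length), Sum.inr c ∈ P.get ⟨j, hj⟩ →
        firstIdx P (Sum.inl (σ.get ⟨i, hi⟩)) < j) :=
  active_clause_in_or_after_bag_general F P σ hP hσ i hi hfi c hc hact
end

section
/- Let G = (V,E) be an (n,d,a)-expander with n ≥ 2, d ≥ 3, a > 0, and let S ⊆ V with |S| = ⌊n/2⌋. Then there exists a matching {a₁u₁, …, a_e u_e} in G with a_i ∈ S, u_i ∈ V∖S, e ≥ (min{1,a}/(8d))·n, such that for all i ≠ j, a_i a_j ∉ E and a_i u_j ∉ E. -/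
/-- Vertex set of a graph given by its edge set. -/
def verts (Eg : Finset (Finset Var)) : Finset Var := Eg.sup id

/-- Open neighborhood of W in the graph with edge set Eg. -/
def nbhd (Eg : Finset (Finset Var)) (W : Finset Var) : Finset Var :=
  (verts Eg).filter (fun v => v ∉ W ∧ ∃ w ∈ W, ({v, w} : Finset Var) ∈ Eg)

/-- Eg is the edge set of an (n,d,a)-expander: n vertices, all edges of size 2,
maximum degree ≤ d, and |N(W)| ≥ a·|W| for all W with |W| ≤ n/2. -/
def IsExpander (Eg : Finset (Finset Var)) (n d : ℕ) (a : ℝ) : Prop :=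
  (verts Eg).card = n ∧
  (∀ e ∈ Eg, e.card = 2) ∧
  (∀ v ∈ verts Eg, (Eg.filter (fun e => v ∈ e)).card ≤ d) ∧
  (∀ W ⊆ verts Eg, (W.card : ℝ) ≤ (n : ℝ) / 2 → a * W.card ≤ ((nbhd Eg W).card : ℝ))

/-!
Take a one-sidedly induced matching `M` from `S` to its complement that cannot be extended, with
left ends `A` and right ends `U`, and let `F = N(A) ∪ N(U)`; it contains `A` and `U`. Maximality
forces every neighbour of `W = S \ F` into `F`, so expansion gives
`a |W| ≤ |F| ≤ 2d|M|`. On the other hand `S ∩ F` and `U` are disjoint subsets of `F`, so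
`|S| ≤ |W| + 2d|M| - |M|`, and combining both bounds with `n ≤ 2|S| + 1` yields
`min 1 a · n ≤ 8d|M|`.
-/

open Finset

section Neighborhoods

variable {Eg : Finset (Finset Var)}

lemma mem_verts_of_mem_edge {e : Finset Var} {v : Var} (he : e ∈ Eg) (hv : v ∈ e) :
    v ∈ verts Eg :=
  mem_sup.2 ⟨e, he, hv⟩

lemma mem_nbhd {W : Finset Var} {v : Var} :
    v ∈ nbhd Eg W ↔ v ∈ verts Eg ∧ v ∉ W ∧ ∃ w ∈ W, ({v, w} : Finset Var) ∈ Eg := by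
  simp [nbhd]

lemma mem_nbhd_of_pair_mem {W : Finset Var} {v w : Var} (hvW : v ∉ W) (hw : w ∈ W)
    (hvw : ({v, w} : Finset Var) ∈ Eg) : v ∈ nbhd Eg W :=
  mem_nbhd.2 ⟨mem_verts_of_mem_edge hvw (mem_insert_self v _), hvW, w, hw, hvw⟩

lemma pair_notMem_of_notMem_nbhd {W : Finset Var} {v w : Var} (hvW : v ∉ W)
    (hv : v ∉ nbhd Eg W) (hw : w ∈ W) : ({v, w} : Finset Var) ∉ Eg :=
  fun hvw => hv (mem_nbhd_of_pair_mem hvW hw hvw)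

lemma card_nbhd_singleton_le {d : ℕ}
    (hdeg : ∀ v ∈ verts Eg, #(Eg.filter (fun e => v ∈ e)) ≤ d) (v : Var) :
    #(nbhd Eg {v}) ≤ d := by
  rcases (nbhd Eg {v}).eq_empty_or_nonempty with hempty | ⟨w, hw⟩
  · simp [hempty]
  have hv : v ∈ verts Eg := by
    obtain ⟨-, -, _, hv', hwv⟩ := mem_nbhd.1 hw
    rw [mem_singleton.1 hv'] at hwv
    exact mem_verts_of_mem_edge hwv (mem_insert_of_mem (mem_singleton_self v))
  refine (card_le_card_of_injOn (fun w => ({w, v} : Finset Var)) ?_ ?_).trans (hdeg v hv)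
  · intro w hw
    obtain ⟨-, -, _, hv', hwv⟩ := mem_nbhd.1 hw
    rw [mem_singleton.1 hv'] at hwv
    simp [hwv]
  · intro x hx y _ hxy
    have hxv : x ≠ v := by simpa using (mem_nbhd.1 hx).2.1
    have hx : x ∈ ({y, v} : Finset Var) := by
      simp only at hxy
      rw [← hxy]
      exact mem_insert_self x _
    simpa [hxv] using hx

lemma nbhd_subset_biUnion (W : Finset Var) :
    nbhd Eg W ⊆ W.biUnion (fun w => nbhd Eg {w}) := by
  intro v hv
  obtain ⟨hv, hvW, w, hw, hvw⟩ := mem_nbhd.1 hv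
  exact mem_biUnion.2 ⟨w, hw, mem_nbhd.2
    ⟨hv, fun h => hvW (mem_singleton.1 h ▸ hw), w, mem_singleton_self w, hvw⟩⟩

lemma card_nbhd_le {d : ℕ} (hdeg : ∀ v ∈ verts Eg, #(Eg.filter (fun e => v ∈ e)) ≤ d)
    (W : Finset Var) : #(nbhd Eg W) ≤ d * #W :=
  calc #(nbhd Eg W) ≤ #(W.biUnion (fun w => nbhd Eg {w})) := card_le_card (nbhd_subset_biUnion W)
    _ ≤ ∑ w ∈ W, #(nbhd Eg {w}) := card_biUnion_le
    _ ≤ #W • d := sum_le_card_nsmul _ _ _ (fun w _ => card_nbhd_singleton_le hdeg w)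
    _ = d * #W := by rw [smul_eq_mul, mul_comm]

end Neighborhoods

/-- A set of pairs `(aᵢ, uᵢ)` read as the edges `aᵢuᵢ` of a one-sidedly induced matching from `S`
to its complement. Distinctness of the endpoints is not required: it follows from the non-edge
conditions (`injOn_fst`, `injOn_snd`). -/
def IsOneSidedInducedMatching (Eg : Finset (Finset Var)) (S : Finset Var)
    (M : Finset (Var × Var)) : Prop :=
  (∀ p ∈ M, p.1 ∈ S ∧ p.2 ∉ S ∧ ({p.1, p.2} : Finset Var) ∈ Eg) ∧
  ∀ p ∈ M, ∀ q ∈ M, p ≠ q →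
    ({p.1, q.1} : Finset Var) ∉ Eg ∧ ({p.1, q.2} : Finset Var) ∉ Eg

def blocked (Eg : Finset (Finset Var)) (M : Finset (Var × Var)) : Finset Var :=
  nbhd Eg (M.image Prod.fst) ∪ nbhd Eg (M.image Prod.snd)

namespace IsOneSidedInducedMatching

variable {Eg : Finset (Finset Var)} {S : Finset Var} {M : Finset (Var × Var)}

lemma empty : IsOneSidedInducedMatching Eg S ∅ := by
  simp [IsOneSidedInducedMatching]

lemma insert (hM : IsOneSidedInducedMatching Eg S M) {w v : Var} (hw : w ∈ S) (hv : v ∉ S)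
    (hwv : ({w, v} : Finset Var) ∈ Eg)
    (hwM : ∀ q ∈ M, ({w, q.1} : Finset Var) ∉ Eg ∧ ({w, q.2} : Finset Var) ∉ Eg)
    (hvM : ∀ q ∈ M, ({q.1, v} : Finset Var) ∉ Eg) :
    IsOneSidedInducedMatching Eg S (Insert.insert (w, v) M) := by
  refine ⟨forall_mem_insert _ _ _ |>.2 ⟨⟨hw, hv, hwv⟩, hM.1⟩, ?_⟩
  intro p hp q hq hpq
  rcases mem_insert.1 hp with rfl | hp <;> rcases mem_insert.1 hq with rfl | hq
  · exact absurd rfl hpq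
  · exact hwM q hq
  · exact ⟨by rw [pair_comm]; exact (hwM p hp).1, hvM p hp⟩
  · exact hM.2 p hp q hq hpq

variable (hM : IsOneSidedInducedMatching Eg S M)
include hM

lemma subset_product : M ⊆ verts Eg ×ˢ verts Eg := fun p hp =>
  have hedge := (hM.1 p hp).2.2
  mem_product.2 ⟨mem_verts_of_mem_edge hedge (mem_insert_self _ _),
    mem_verts_of_mem_edge hedge (mem_insert_of_mem (mem_singleton_self _))⟩

lemma injOn_fst : Set.InjOn Prod.fst (M : Set (Var × Var)) := by
  intro p hp q hq h
  by_contra hpq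
  exact (hM.2 p hp q hq hpq).2 (by rw [h]; exact (hM.1 q hq).2.2)

lemma injOn_snd : Set.InjOn Prod.snd (M : Set (Var × Var)) := by
  intro p hp q hq h
  by_contra hpq
  exact (hM.2 p hp q hq hpq).2 (by rw [← h]; exact (hM.1 p hp).2.2)

lemma image_fst_subset : M.image Prod.fst ⊆ S := by
  intro v hv
  obtain ⟨p, hp, rfl⟩ := mem_image.1 hv
  exact (hM.1 p hp).1

lemma notMem_image_snd {v : Var} (hv : v ∈ S) : v ∉ M.image Prod.snd := by
  intro hvU
  obtain ⟨p, hp, rfl⟩ := mem_image.1 hvU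
  exact (hM.1 p hp).2.1 hv

lemma image_snd_subset_nbhd : M.image Prod.snd ⊆ nbhd Eg (M.image Prod.fst) := by
  intro v hv
  obtain ⟨p, hp, rfl⟩ := mem_image.1 hv
  refine mem_nbhd_of_pair_mem (fun h => (hM.1 p hp).2.1 (hM.image_fst_subset h))
    (mem_image_of_mem _ hp) ?_
  rw [pair_comm]
  exact (hM.1 p hp).2.2

lemma image_fst_subset_nbhd : M.image Prod.fst ⊆ nbhd Eg (M.image Prod.snd) := by
  intro v hv
  obtain ⟨p, hp, rfl⟩ := mem_image.1 hv
  exact mem_nbhd_of_pair_mem (hM.notMem_image_snd (hM.1 p hp).1) (mem_image_of_mem _ hp)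
    (hM.1 p hp).2.2

lemma card_blocked_le {d : ℕ} (hdeg : ∀ v ∈ verts Eg, #(Eg.filter (fun e => v ∈ e)) ≤ d) :
    #(blocked Eg M) ≤ 2 * d * #M :=
  calc #(blocked Eg M)
      ≤ #(nbhd Eg (M.image Prod.fst)) + #(nbhd Eg (M.image Prod.snd)) := card_union_le _ _
    _ ≤ d * #(M.image Prod.fst) + d * #(M.image Prod.snd) :=
      add_le_add (card_nbhd_le hdeg _) (card_nbhd_le hdeg _)
    _ = 2 * d * #M := by
      rw [card_image_of_injOn hM.injOn_fst, card_image_of_injOn hM.injOn_snd]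
      ring

lemma card_inter_blocked_add_card_le : #(S ∩ blocked Eg M) + #M ≤ #(blocked Eg M) := by
  rw [← card_image_of_injOn hM.injOn_snd, ← card_union_of_disjoint]
  · exact card_le_card (union_subset inter_subset_right
      (hM.image_snd_subset_nbhd.trans subset_union_left))
  · exact disjoint_left.2 fun v hv => hM.notMem_image_snd (mem_inter.1 hv).1

lemma nbhd_sdiff_blocked_subset
    (hmax : ∀ p ∉ M, ¬ IsOneSidedInducedMatching Eg S (Insert.insert p M)) :
    nbhd Eg (S \ blocked Eg M) ⊆ blocked Eg M := by
  intro v hv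
  obtain ⟨-, hvW, w, hwW, hvw⟩ := mem_nbhd.1 hv
  obtain ⟨hwS, hwF⟩ := mem_sdiff.1 hwW
  by_contra hvF
  have hvS : v ∉ S := fun hvS => hvW (mem_sdiff.2 ⟨hvS, hvF⟩)
  have hwA : w ∉ M.image Prod.fst := fun h => hwF (mem_union_right _ (hM.image_fst_subset_nbhd h))
  have hvA : v ∉ M.image Prod.fst := fun h => hvS (hM.image_fst_subset h)
  have hwNA : w ∉ nbhd Eg (M.image Prod.fst) := fun h => hwF (mem_union_left _ h)
  have hwNU : w ∉ nbhd Eg (M.image Prod.snd) := fun h => hwF (mem_union_right _ h)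
  have hvNA : v ∉ nbhd Eg (M.image Prod.fst) := fun h => hvF (mem_union_left _ h)
  refine hmax (w, v) (fun h => hwA (mem_image_of_mem Prod.fst h))
    (hM.insert hwS hvS (by rw [pair_comm]; exact hvw) (fun q hq => ⟨?_, ?_⟩) (fun q hq => ?_))
  · exact pair_notMem_of_notMem_nbhd hwA hwNA (mem_image_of_mem _ hq)
  · exact pair_notMem_of_notMem_nbhd (hM.notMem_image_snd hwS) hwNU (mem_image_of_mem _ hq)
  · rw [pair_comm]
    exact pair_notMem_of_notMem_nbhd hvA hvNA (mem_image_of_mem _ hq)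

lemma exists_enumeration :
    ∃ av uv : Fin #M → Var,
      Function.Injective av ∧ Function.Injective uv ∧
      (∀ i j, av i ≠ uv j) ∧
      (∀ i, av i ∈ S) ∧ (∀ i, uv i ∈ verts Eg \ S) ∧
      (∀ i, ({av i, uv i} : Finset Var) ∈ Eg) ∧
      (∀ i j, i ≠ j →
        ({av i, av j} : Finset Var) ∉ Eg ∧ ({av i, uv j} : Finset Var) ∉ Eg) := by
  set g : Fin #M → Var × Var := fun i => M.equivFin.symm i
  have hg : ∀ i, g i ∈ M := fun i => coe_mem _
  have hg_inj : Function.Injective g := Subtype.val_injective.comp M.equivFin.symm.injective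
  refine ⟨fun i => (g i).1, fun i => (g i).2, fun i j h => hg_inj (hM.injOn_fst (hg i) (hg j) h),
    fun i j h => hg_inj (hM.injOn_snd (hg i) (hg j) h), fun i j h => ?_, fun i => (hM.1 _ (hg i)).1,
    fun i => mem_sdiff.2 ⟨(hM.subset_product (hg i) |> mem_product.1).2, (hM.1 _ (hg i)).2.1⟩,
    fun i => (hM.1 _ (hg i)).2.2, fun i j hij => hM.2 _ (hg i) _ (hg j) (hg_inj.ne hij)⟩
  exact (hM.1 _ (hg j)).2.1 (by simpa only [← h] using (hM.1 _ (hg i)).1)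

end IsOneSidedInducedMatching

lemma exists_maximal_isOneSidedInducedMatching (Eg : Finset (Finset Var)) (S : Finset Var) :
    ∃ M, IsOneSidedInducedMatching Eg S M ∧
      ∀ p ∉ M, ¬ IsOneSidedInducedMatching Eg S (insert p M) := by
  classical
  set T := (verts Eg ×ˢ verts Eg).powerset.filter (IsOneSidedInducedMatching Eg S)
  obtain ⟨M, hMT, hmax⟩ := exists_max_image T card
    ⟨∅, mem_filter.2 ⟨empty_mem_powerset _, IsOneSidedInducedMatching.empty⟩⟩
  refine ⟨M, (mem_filter.1 hMT).2, fun p hp hins => ?_⟩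
  have := hmax _ (mem_filter.2 ⟨mem_powerset.2 hins.subset_product, hins⟩)
  rw [card_insert_of_notMem hp] at this
  omega

lemma IsExpander.min_one_mul_le_card_matching {Eg : Finset (Finset Var)} {n d : ℕ} {a : ℝ}
    (hexp : IsExpander Eg n d a) (hn : 2 ≤ n) (ha : 0 < a) {S : Finset Var}
    (hS : S ⊆ verts Eg) (hcard : #S = n / 2) {M : Finset (Var × Var)}
    (hM : IsOneSidedInducedMatching Eg S M)
    (hmax : ∀ p ∉ M, ¬ IsOneSidedInducedMatching Eg S (insert p M)) :
    min 1 a * n ≤ 8 * d * #M := by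
  obtain ⟨-, -, hdeg, hexpand⟩ := hexp
  set F := blocked Eg M
  set W := S \ F
  have hWS : #W ≤ #S := card_le_card sdiff_subset
  have hW : a * #W ≤ #F := by
    refine (hexpand W (sdiff_subset.trans hS) ?_).trans ?_
    · rw [le_div_iff₀ two_pos]
      exact_mod_cast (by omega : #W * 2 ≤ n)
    · exact_mod_cast card_le_card (hM.nbhd_sdiff_blocked_subset hmax)
  have hSWF : (#W : ℝ) + #(S ∩ F) = #S := by exact_mod_cast card_sdiff_add_card_inter S F
  have hF : (#F : ℝ) ≤ 2 * d * #M := by exact_mod_cast hM.card_blocked_le hdeg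
  have hSF : (#(S ∩ F) : ℝ) + #M ≤ #F := by exact_mod_cast hM.card_inter_blocked_add_card_le
  have hS1 : (1 : ℝ) ≤ #S := by exact_mod_cast (by omega : 1 ≤ #S)
  have hnS : (n : ℝ) ≤ 2 * #S + 1 := by exact_mod_cast (by omega : n ≤ 2 * #S + 1)
  have hb : 0 < min 1 a := lt_min one_pos ha
  have hb1 : min 1 a ≤ 1 := min_le_left 1 a
  have hbW : min 1 a * #W ≤ #F :=
    (mul_le_mul_of_nonneg_right (min_le_right 1 a) (Nat.cast_nonneg _)).trans hW
  have hbSF : min 1 a * #(S ∩ F) ≤ #(S ∩ F) := mul_le_of_le_one_left (Nat.cast_nonneg _) hb1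
  have hbS : min 1 a * #S ≤ 4 * d * #M - #M := by rw [← hSWF]; linarith
  rcases Nat.eq_zero_or_pos #M with he | he
  · rw [he, Nat.cast_zero] at hbS
    nlinarith
  · have he1 : (1 : ℝ) ≤ #M := by exact_mod_cast he
    nlinarith

theorem expander_one_sided_induced_matching_general (Eg : Finset (Finset Var)) (n d : ℕ) (a : ℝ)
    (hexp : IsExpander Eg n d a) (hn : 2 ≤ n) (ha : 0 < a)
    (S : Finset Var) (hS : S ⊆ verts Eg) (hcard : S.card = n / 2) :
    ∃ e : ℕ, (min 1 a / (8 * d)) * n ≤ (e : ℝ) ∧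
      ∃ av uv : Fin e → Var,
        Function.Injective av ∧ Function.Injective uv ∧
        (∀ i j, av i ≠ uv j) ∧
        (∀ i, av i ∈ S) ∧ (∀ i, uv i ∈ verts Eg \ S) ∧
        (∀ i, ({av i, uv i} : Finset Var) ∈ Eg) ∧
        (∀ i j, i ≠ j →
          ({av i, av j} : Finset Var) ∉ Eg ∧ ({av i, uv j} : Finset Var) ∉ Eg) := by
  obtain ⟨M, hM, hmax⟩ := exists_maximal_isOneSidedInducedMatching Eg S
  refine ⟨#M, ?_, hM.exists_enumeration⟩
  rw [div_mul_eq_mul_div]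
  refine div_le_of_le_mul₀ (by positivity) (Nat.cast_nonneg _) ?_
  rw [mul_comm (#M : ℝ)]
  exact hexp.min_one_mul_le_card_matching hn ha hS hcard hM hmax

/-- in an (n,d,a)-expander with S a set of ⌊n/2⌋ vertices, there is a
matching a₁u₁,…,a_e u_e with aᵢ ∈ S, uᵢ ∉ S, of size e ≥ (min{1,a}/(8d))·n, such that
for i ≠ j neither aᵢaⱼ nor aᵢuⱼ is an edge. -/
theorem expander_one_sided_induced_matching (Eg : Finset (Finset Var)) (n d : ℕ) (a : ℝ)
    (hexp : IsExpander Eg n d a) (hn : 2 ≤ n) (hd : 3 ≤ d) (ha : 0 < a)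
    (S : Finset Var) (hS : S ⊆ verts Eg) (hcard : S.card = n / 2) :
    ∃ e : ℕ, (min 1 a / (8 * d)) * n ≤ (e : ℝ) ∧
      ∃ av uv : Fin e → Var,
        Function.Injective av ∧ Function.Injective uv ∧
        (∀ i j, av i ≠ uv j) ∧
        (∀ i, av i ∈ S) ∧ (∀ i, uv i ∈ verts Eg \ S) ∧
        (∀ i, ({av i, uv i} : Finset Var) ∈ Eg) ∧
        (∀ i j, i ≠ j →
          ({av i, av j} : Finset Var) ∉ Eg ∧ ({av i, uv j} : Finset Var) ∉ Eg) :=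
  expander_one_sided_induced_matching_general Eg n d a hexp hn ha S hS hcard
end
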